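/- For every integer N ≥ 2, the supremum of Σ_i α_i over all α, β ∈ [0,1]^N satisfying α_i + β_i ≤ 1 for all i, Σ_i β_i ≤ 1, and α_i ≤ Σ_{j≠i} β_j for all i, equals N − 1. (Without energy constraints, the oracle groupput is N − 1, achieved when one node always transmits and the remaining N − 1 nodes always listen.) -/

import Mathlib

open Finset

section Groupput

variable {ι : Type*} [Fintype ι] [DecidableEq ι]

theorem sum_sum_erase_univ (f : ι → ℝ) :
    ∑ i, ∑ j ∈ univ.erase i, f j = (Fintype.card ι - 1) * ∑ j, f j := by
  simp only [sum_erase_eq_sub (mem_univ _), sum_sub_distrib, sum_const, card_univ,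
    nsmul_eq_mul]
  ring

/-- Summing the listening constraints counts every transmission once for each of the other
`card ι - 1` nodes. -/
theorem sum_le_card_sub_one_of_le_sum_erase [Nonempty ι] {α β : ι → ℝ}
    (hβ : ∑ i, β i ≤ 1) (hα : ∀ i, α i ≤ ∑ j ∈ univ.erase i, β j) :
    ∑ i, α i ≤ Fintype.card ι - 1 := by
  have hcard : (0 : ℝ) ≤ Fintype.card ι - 1 := by
    have : 1 ≤ Fintype.card ι := Fintype.card_pos
    simp only [sub_nonneg, Nat.one_le_cast, this]
  calc ∑ i, α i ≤ ∑ i, ∑ j ∈ univ.erase i, β j := sum_le_sum fun i _ => hα i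
    _ = (Fintype.card ι - 1) * ∑ j, β j := sum_sum_erase_univ β
    _ ≤ (Fintype.card ι - 1) * 1 := mul_le_mul_of_nonneg_left hβ hcard
    _ = Fintype.card ι - 1 := mul_one _

theorem one_sub_single_le_sum_erase_single (i₀ i : ι) :
    (1 - Pi.single i₀ 1 : ι → ℝ) i ≤ ∑ j ∈ univ.erase i, (Pi.single i₀ 1 : ι → ℝ) j := by
  rw [sum_pi_single']
  by_cases h : i = i₀
  · subst h; simp
  · simp [h, Ne.symm h]

theorem sum_one_sub_single (i₀ : ι) :
    ∑ i, (1 - Pi.single i₀ 1 : ι → ℝ) i = Fintype.card ι - 1 := by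
  simp [sum_sub_distrib]

end Groupput

/-- Without energy constraints, the supremum of the groupput
`Σ_i α_i` over `α, β ∈ [0,1]^N` with `α_i + β_i ≤ 1`, `Σ_i β_i ≤ 1`, and
`α_i ≤ Σ_{j≠i} β_j` equals `N − 1`. -/
theorem unconstrained_oracle_groupput (N : ℕ) (hN : 2 ≤ N) :
    sSup {v : ℝ | ∃ α β : Fin N → ℝ,
        (∀ i, α i ∈ Set.Icc (0 : ℝ) 1) ∧ (∀ i, β i ∈ Set.Icc (0 : ℝ) 1) ∧
        (∀ i, α i + β i ≤ 1) ∧ (∑ i, β i ≤ 1) ∧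
        (∀ i, α i ≤ ∑ j ∈ univ.erase i, β j) ∧
        v = ∑ i, α i}
      = (N : ℝ) - 1 := by
  let i₀ : Fin N := ⟨0, by omega⟩
  refine IsGreatest.csSup_eq ⟨?_, ?_⟩
  · -- node `i₀` always transmits, every other node always listens
    refine ⟨1 - Pi.single i₀ 1, Pi.single i₀ 1, fun i => ?_, fun i => ?_, fun i => ?_,
      by simp, one_sub_single_le_sum_erase_single i₀,
      by rw [sum_one_sub_single, Fintype.card_fin]⟩ <;>
      by_cases h : i = i₀ <;> simp [h]
  · rintro v ⟨α, β, -, -, -, hβ, hα, rfl⟩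
    have : Nonempty (Fin N) := ⟨i₀⟩
    simpa using sum_le_card_sub_one_of_le_sum_erase hβ hα
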